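/- Under the setting of the previous statement, if f_n minimizes J^{λ_n} and the subsequence f_{n_k} converges weakly in H to f*, then lim_{k→∞} (1/(2λ_{n_k}²)) d_B(f_{n_k}, F)² = 0 along a further subsequence, i.e., the penalty term vanishes in the limit. -/

import Mathlib

/-!
Testing the minimality of `fₙ` against any `g` with `ι g ∈ F` gives
`J fₙ + Pₙ ≤ J g`, where `Pₙ` is the penalty. With `g` fixed, coercivity bounds `‖fₙ‖` and `Pₙ`,
so `d_B(ι fₙ, F) = O(λₙ) → 0`. Compactness of `ι` upgrades weak convergence to
`ι f_{n_k} → ι f*` along a further subsequence, hence `ι f* ∈ F`, and testing against `g = f*`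
bounds `Pₙ` by `Φ(ι f*) - Φ(ι fₙ) + ½(‖f*‖² - ‖fₙ‖²)`, whose lim sup is `≤ 0` by continuity of
`Φ` and weak lower semicontinuity of the norm.
-/

open Filter Metric Topology

section WeakConvergence

variable {H B : Type*} [NormedAddCommGroup H] [InnerProductSpace ℝ H]
  [NormedAddCommGroup B] [NormedSpace ℝ B]

theorem norm_sq_sub_norm_sq_le_two_inner (x y : H) :
    ‖y‖ ^ 2 - ‖x‖ ^ 2 ≤ 2 * inner ℝ (y - x) y := by
  rw [inner_sub_left, real_inner_self_eq_norm_sq]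
  nlinarith [norm_sub_sq_real x y, sq_nonneg ‖x - y‖]

theorem tendsto_strongDual_of_tendsto_inner [CompleteSpace H] {β : Type*} {l : Filter β}
    {x : β → H} {y : H}
    (hweak : ∀ g : H, Tendsto (fun k => inner ℝ (x k) g) l (𝓝 (inner ℝ y g)))
    (ℓ : StrongDual ℝ H) : Tendsto (fun k => ℓ (x k)) l (𝓝 (ℓ y)) := by
  have hrepr : ∀ z : H, inner ℝ z ((InnerProductSpace.toDual ℝ H).symm ℓ) = ℓ z := fun z => by
    rw [real_inner_comm, InnerProductSpace.toDual_symm_apply]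
  simpa only [hrepr] using hweak ((InnerProductSpace.toDual ℝ H).symm ℓ)

theorem IsCompactOperator.exists_strictMono_tendsto_of_tendsto_inner [CompleteSpace H]
    {T : H →L[ℝ] B} (hT : IsCompactOperator T) {x : ℕ → H} {M : ℝ} (hM : ∀ k, ‖x k‖ ≤ M)
    {y : H} (hweak : ∀ g : H, Tendsto (fun k => inner ℝ (x k) g) atTop (𝓝 (inner ℝ y g))) :
    ∃ ψ : ℕ → ℕ, StrictMono ψ ∧ Tendsto (fun k => T (x (ψ k))) atTop (𝓝 (T y)) := by
  have hmem : ∀ k, T (x k) ∈ closure ((T : H →ₗ[ℝ] B) '' closedBall 0 M) := fun k =>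
    subset_closure ⟨x k, mem_closedBall_zero_iff.2 (hM k), rfl⟩
  obtain ⟨b, -, ψ, hψ, hb⟩ := (hT.isCompact_closure_image_closedBall M).tendsto_subseq hmem
  obtain rfl : b = T y := (SeparatingDual.eq_iff_forall_dual_eq (R := ℝ)).2 fun ℓ =>
    tendsto_nhds_unique ((ℓ.continuous.tendsto b).comp hb)
      ((tendsto_strongDual_of_tendsto_inner hweak (ℓ.comp T)).comp hψ.tendsto_atTop)
  exact ⟨ψ, hψ, hb⟩

theorem tendsto_zero_of_add_half_norm_sq_le {x : ℕ → H} {y : H} {p u : ℕ → ℝ} {u₀ : ℝ}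
    (hweak : ∀ g : H, Tendsto (fun k => inner ℝ (x k) g) atTop (𝓝 (inner ℝ y g)))
    (hu : Tendsto u atTop (𝓝 u₀)) (hp : ∀ k, 0 ≤ p k)
    (hle : ∀ k, u k + 1 / 2 * ‖x k‖ ^ 2 + p k ≤ u₀ + 1 / 2 * ‖y‖ ^ 2) :
    Tendsto p atTop (𝓝 0) := by
  have hbound : ∀ k, p k ≤ (u₀ - u k) + (‖y‖ ^ 2 - inner ℝ (x k) y) := fun k => by
    have := norm_sq_sub_norm_sq_le_two_inner (x k) y
    rw [inner_sub_left, real_inner_self_eq_norm_sq] at this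
    linarith [hle k]
  have hlim : Tendsto (fun k => (u₀ - u k) + (‖y‖ ^ 2 - inner ℝ (x k) y)) atTop (𝓝 0) := by
    have := (tendsto_const_nhds (x := u₀)).sub hu |>.add
      ((tendsto_const_nhds (x := ‖y‖ ^ 2)).sub (hweak y))
    rwa [sub_self, real_inner_self_eq_norm_sq, sub_self, add_zero] at this
  exact squeeze_zero hp hbound hlim

end WeakConvergence

theorem tendsto_zero_of_inv_sq_mul_sq_le {β : Type*} {l : Filter β} {d lam : β → ℝ} {c : ℝ}
    (hlam : Tendsto lam l (𝓝 0)) (hne : ∀ n, lam n ≠ 0) (hd : ∀ n, 0 ≤ d n)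
    (hb : ∀ n, 1 / (2 * lam n ^ 2) * d n ^ 2 ≤ c) : Tendsto d l (𝓝 0) := by
  have hbound : ∀ n, d n ≤ |lam n| * √(2 * c) := fun n => by
    have hsq : d n ^ 2 ≤ lam n ^ 2 * (2 * c) := by
      have h2 : (0 : ℝ) < 2 * lam n ^ 2 := by have := hne n; positivity
      have := hb n
      rw [one_div, inv_mul_le_iff₀ h2] at this
      linarith
    calc d n ≤ √(lam n ^ 2 * (2 * c)) := Real.le_sqrt_of_sq_le hsq
      _ = |lam n| * √(2 * c) := by rw [Real.sqrt_mul (sq_nonneg _), Real.sqrt_sq_eq_abs]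
  have hlim : Tendsto (fun n => |lam n| * √(2 * c)) l (𝓝 0) := by
    simpa using hlam.abs.mul_const (√(2 * c))
  exact squeeze_zero hd hbound hlim

theorem IsClosed.mem_of_tendsto_infDist {α β : Type*} [PseudoMetricSpace α] {s : Set α}
    (hs : IsClosed s) (hne : s.Nonempty) {l : Filter β} [l.NeBot] {x : β → α} {a : α}
    (hx : Tendsto x l (𝓝 a)) (hd : Tendsto (fun k => infDist (x k) s) l (𝓝 0)) : a ∈ s := by
  rw [hs.mem_iff_infDist_zero hne]
  exact tendsto_nhds_unique ((continuous_infDist_pt s).continuousAt.tendsto.comp hx) hd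

theorem relaxed_objective_penalty_vanishes_general
    {H B : Type*} [NormedAddCommGroup H] [InnerProductSpace ℝ H] [CompleteSpace H]
    [NormedAddCommGroup B] [NormedSpace ℝ B]
    (ι : H →L[ℝ] B) (hιcpt : IsCompactOperator ι)
    (F : Set B) (hFclosed : IsClosed F)
    (hinter : ∃ f : H, ι f ∈ F)
    (Φ : B → ℝ) (hΦcont : Continuous Φ)
    (J : H → ℝ) (hJ : ∀ f : H, J f = Φ (ι f) + (1 / 2) * ‖f‖ ^ 2)
    (K α : ℝ) (hα : 0 < α) (hcoercive : ∀ f : H, J f ≥ K + α * ‖f‖ ^ 2)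
    (lam : ℕ → ℝ) (hlampos : ∀ n, 0 < lam n)
    (hlamto0 : Filter.Tendsto lam Filter.atTop (nhds 0))
    (fseq : ℕ → H)
    (hmin : ∀ n, ∀ g : H,
      J (fseq n) + (1 / (2 * lam n ^ 2)) * (Metric.infDist (ι (fseq n)) F) ^ 2 ≤
        J g + (1 / (2 * lam n ^ 2)) * (Metric.infDist (ι g) F) ^ 2)
    (φ : ℕ → ℕ) (hφ : StrictMono φ) (fstar : H)
    (hweak : ∀ g : H, Filter.Tendsto (fun k => (inner ℝ (fseq (φ k)) g : ℝ)) Filter.atTop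
      (nhds (inner ℝ fstar g : ℝ))) :
    ∃ ψ : ℕ → ℕ, StrictMono ψ ∧
      Filter.Tendsto
        (fun k => (1 / (2 * lam (φ (ψ k)) ^ 2)) *
          (Metric.infDist (ι (fseq (φ (ψ k)))) F) ^ 2)
        Filter.atTop (nhds 0) := by
  obtain ⟨g₀, hg₀⟩ := hinter
  set P : ℕ → ℝ := fun n => 1 / (2 * lam n ^ 2) * infDist (ι (fseq n)) F ^ 2
  have hP_nonneg : ∀ n, 0 ≤ P n := fun n => by positivity
  have hcompare : ∀ g, ι g ∈ F → ∀ n, J (fseq n) + P n ≤ J g := fun g hg n => by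
    have := hmin n g
    rwa [infDist_zero_of_mem hg, zero_pow two_ne_zero, mul_zero, add_zero] at this
  have henergy_le : ∀ n, α * ‖fseq n‖ ^ 2 + P n ≤ J g₀ - K := fun n => by
    linarith [hcompare g₀ hg₀ n, hcoercive (fseq n)]
  have hbdd : ∀ n, ‖fseq n‖ ≤ √((J g₀ - K) / α) := fun n =>
    Real.le_sqrt_of_sq_le ((le_div_iff₀' hα).2 (by linarith [henergy_le n, hP_nonneg n]))
  have hdist : Tendsto (fun n => infDist (ι (fseq n)) F) atTop (𝓝 0) :=
    tendsto_zero_of_inv_sq_mul_sq_le (c := J g₀ - K) hlamto0 (fun n => (hlampos n).ne')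
      (fun n => infDist_nonneg) fun n => by
        linarith [henergy_le n, mul_nonneg hα.le (sq_nonneg ‖fseq n‖)]
  obtain ⟨ψ, hψ, hconv⟩ :=
    hιcpt.exists_strictMono_tendsto_of_tendsto_inner (fun k => hbdd (φ k)) hweak
  have hstar : ι fstar ∈ F := hFclosed.mem_of_tendsto_infDist ⟨_, hg₀⟩ hconv
    (hdist.comp (hφ.comp hψ).tendsto_atTop)
  refine ⟨ψ, hψ, tendsto_zero_of_add_half_norm_sq_le (fun g => (hweak g).comp hψ.tendsto_atTop)
    ((hΦcont.tendsto _).comp hconv) (fun k => hP_nonneg _) fun k => ?_⟩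
  simpa only [hJ, Function.comp_apply] using hcompare fstar hstar (φ (ψ k))

/-- In the setting of Proposition 3.2, the penalty term vanishes along a further
subsequence of any weakly convergent subsequence of the minimizers. -/
theorem relaxed_objective_penalty_vanishes
    {H B : Type*} [NormedAddCommGroup H] [InnerProductSpace ℝ H] [CompleteSpace H]
    [NormedAddCommGroup B] [NormedSpace ℝ B] [CompleteSpace B]
    (ι : H →L[ℝ] B) (hιinj : Function.Injective ι) (hιcpt : IsCompactOperator ι)
    (F : Set B) (hFne : F.Nonempty) (hFclosed : IsClosed F)
    (hHB : ∀ S : Set B, S ⊆ F → IsClosed S → Bornology.IsBounded S → IsCompact S)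
    (hinter : ∃ f : H, ι f ∈ F)
    (Φ : B → ℝ) (hΦcont : Continuous Φ)
    (J : H → ℝ) (hJ : ∀ f : H, J f = Φ (ι f) + (1 / 2) * ‖f‖ ^ 2)
    (K α : ℝ) (hα : 0 < α) (hcoercive : ∀ f : H, J f ≥ K + α * ‖f‖ ^ 2)
    (lam : ℕ → ℝ) (hlampos : ∀ n, 0 < lam n)
    (hlamto0 : Filter.Tendsto lam Filter.atTop (nhds 0))
    (fseq : ℕ → H)
    (hmin : ∀ n, ∀ g : H,
      J (fseq n) + (1 / (2 * lam n ^ 2)) * (Metric.infDist (ι (fseq n)) F) ^ 2 ≤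
        J g + (1 / (2 * lam n ^ 2)) * (Metric.infDist (ι g) F) ^ 2)
    (φ : ℕ → ℕ) (hφ : StrictMono φ) (fstar : H)
    (hweak : ∀ g : H, Filter.Tendsto (fun k => (inner ℝ (fseq (φ k)) g : ℝ)) Filter.atTop
      (nhds (inner ℝ fstar g : ℝ))) :
    ∃ ψ : ℕ → ℕ, StrictMono ψ ∧
      Filter.Tendsto
        (fun k => (1 / (2 * lam (φ (ψ k)) ^ 2)) *
          (Metric.infDist (ι (fseq (φ (ψ k)))) F) ^ 2)
        Filter.atTop (nhds 0) :=
  relaxed_objective_penalty_vanishes_general ι hιcpt F hFclosed hinter Φ hΦcont J hJ K α hα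
    hcoercive lam hlampos hlamto0 fseq hmin φ hφ fstar hweak
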